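/- With the preorder $\preceq_{\mathbf{i}}$ on $V \setminus \{0\}$ defined lexicographically from locally nilpotent operators $e_i$ as above, if $v, v' \in V \setminus \{0\}$ satisfy $v \not\equiv_{\mathbf{i}} v'$ (i.e. they are not equivalent in the preorder), then $v + v' \ne 0$ and $v + v' \equiv_{\mathbf{i}} \max_{\preceq_{\mathbf{i}}}(v, v')$. -/
import Mathlib

/-- `ε_i(v) = min {n ≥ 0 | e^(n+1) v = 0}` for a locally nilpotent operator `e`. -/
noncomputable def epsNum {k V : Type*} [CommRing k] [AddCommGroup V] [Module k V]
    (e : Module.End k V) (v : V) : ℕ :=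
  sInf {n : ℕ | (e ^ (n + 1)) v = 0}

/-- The lexicographic preorder `≼_𝐢` on nonzero vectors attached to a sequence `𝐢` of
indices: compare `ε_{i₁}`, then recursively compare the top terms `e_{i₁}^{ε_{i₁}(v)} v`. -/
def lexPre {k V : Type*} [CommRing k] [AddCommGroup V] [Module k V] {I : Type*}
    (e : I → Module.End k V) : List I → V → V → Prop
  | [], _, _ => True
  | i :: is, v, v' =>
      epsNum (e i) v < epsNum (e i) v' ∨
      (epsNum (e i) v = epsNum (e i) v' ∧
        lexPre e is (((e i) ^ epsNum (e i) v) v) (((e i) ^ epsNum (e i) v') v'))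

section Aux
variable {k V : Type*} [CommRing k] [AddCommGroup V] [Module k V]

lemma pow_apply_zero_mono (e : Module.End k V) {v : V} {m n : ℕ} (h : m ≤ n)
    (hm : (e ^ m) v = 0) : (e ^ n) v = 0 := by
  obtain ⟨d, rfl⟩ := Nat.exists_eq_add_of_le h
  rw [add_comm, pow_add, Module.End.mul_apply, hm, map_zero]

lemma epsSet_nonempty (e : Module.End k V) (v : V) (h : ∃ n, (e ^ n) v = 0) :
    {n : ℕ | (e ^ (n + 1)) v = 0}.Nonempty := by
  obtain ⟨n, hn⟩ := h
  exact ⟨n, pow_apply_zero_mono e (Nat.le_succ n) hn⟩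

lemma pow_epsNum_succ (e : Module.End k V) (v : V) (h : ∃ n, (e ^ n) v = 0) :
    (e ^ (epsNum e v + 1)) v = 0 :=
  Nat.sInf_mem (epsSet_nonempty e v h)

lemma pow_epsNum_ne_zero (e : Module.End k V) {v : V} (h : ∃ n, (e ^ n) v = 0)
    (hv : v ≠ 0) : (e ^ epsNum e v) v ≠ 0 := by
  intro h0
  rcases hE : epsNum e v with _ | m
  · rw [hE, pow_zero] at h0
    exact hv (by simpa using h0)
  · rw [hE] at h0
    have hmem : m ∈ {n : ℕ | (e ^ (n + 1)) v = 0} := h0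
    have := Nat.sInf_le hmem
    rw [show sInf {n : ℕ | (e ^ (n + 1)) v = 0} = epsNum e v from rfl, hE] at this
    omega

lemma epsNum_eq (e : Module.End k V) {v : V} {n : ℕ} (h1 : (e ^ (n + 1)) v = 0)
    (h2 : (e ^ n) v ≠ 0) : epsNum e v = n := by
  apply le_antisymm (Nat.sInf_le h1)
  apply le_csInf ⟨n, h1⟩
  intro m hm
  by_contra hlt
  push_neg at hlt
  exact h2 (pow_apply_zero_mono e (by omega) hm)

variable {I : Type*}

lemma lexPre_refl (e : I → Module.End k V) : ∀ (l : List I) (v : V), lexPre e l v v := by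
  intro l
  induction l with
  | nil => intro v; trivial
  | cons i is ih => intro v; exact Or.inr ⟨rfl, ih _⟩

lemma lexPre_total (e : I → Module.End k V) :
    ∀ (l : List I) (v v' : V), lexPre e l v v' ∨ lexPre e l v' v := by
  intro l
  induction l with
  | nil => intro v v'; exact Or.inl trivial
  | cons i is ih =>
    intro v v'
    rcases lt_trichotomy (epsNum (e i) v) (epsNum (e i) v') with h | h | h
    · exact Or.inl (Or.inl h)
    · rcases ih ((e i ^ epsNum (e i) v) v) ((e i ^ epsNum (e i) v') v') with h' | h'
      · exact Or.inl (Or.inr ⟨h, h'⟩)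
      · exact Or.inr (Or.inr ⟨h.symm, h'⟩)
    · exact Or.inr (Or.inl h)

lemma lexPre_key (e : I → Module.End k V)
    (hnil : ∀ (i : I) (v : V), ∃ n : ℕ, ((e i) ^ n) v = 0) :
    ∀ (l : List I) (v v' : V), v ≠ 0 → v' ≠ 0 →
      lexPre e l v v' → ¬ lexPre e l v' v →
      v + v' ≠ 0 ∧ lexPre e l (v + v') v' ∧ lexPre e l v' (v + v') := by
  intro l
  induction l with
  | nil => intro v v' _ _ _ h'; exact absurd trivial h'
  | cons i is ih =>
    intro v v' hv hv' h h'
    have hvz : ((e i) ^ (epsNum (e i) v + 1)) v = 0 := pow_epsNum_succ _ _ (hnil i v)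
    have hv'z : ((e i) ^ (epsNum (e i) v' + 1)) v' = 0 := pow_epsNum_succ _ _ (hnil i v')
    have htne : ((e i) ^ epsNum (e i) v) v ≠ 0 := pow_epsNum_ne_zero _ (hnil i v) hv
    have ht'ne : ((e i) ^ epsNum (e i) v') v' ≠ 0 := pow_epsNum_ne_zero _ (hnil i v') hv'
    rcases h with hlt | ⟨heq, hrec⟩
    · -- epsNum v < epsNum v'
      have hvb : ((e i) ^ epsNum (e i) v') v = 0 :=
        pow_apply_zero_mono _ (by omega) hvz
      have htop : ((e i) ^ epsNum (e i) v') (v + v') = ((e i) ^ epsNum (e i) v') v' := by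
        rw [map_add, hvb, zero_add]
      have hsucc : ((e i) ^ (epsNum (e i) v' + 1)) (v + v') = 0 := by
        rw [map_add, hv'z, pow_apply_zero_mono _ (by omega) hvz, add_zero]
      have hne0 : v + v' ≠ 0 := by
        intro h0
        rw [h0, map_zero] at htop
        exact ht'ne htop.symm
      have hEps : epsNum (e i) (v + v') = epsNum (e i) v' :=
        epsNum_eq _ hsucc (by rw [htop]; exact ht'ne)
      refine ⟨hne0, Or.inr ⟨hEps, ?_⟩, Or.inr ⟨hEps.symm, ?_⟩⟩
      · rw [hEps, htop]; exact lexPre_refl e is _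
      · rw [hEps, htop]; exact lexPre_refl e is _
    · -- epsNum v = epsNum v'
      have hrec' : ¬ lexPre e is (((e i) ^ epsNum (e i) v') v') (((e i) ^ epsNum (e i) v) v) := by
        intro hx
        exact h' (Or.inr ⟨heq.symm, hx⟩)
      obtain ⟨hs0, hs1, hs2⟩ := ih _ _ htne ht'ne hrec hrec'
      have htop : ((e i) ^ epsNum (e i) v) (v + v') =
          ((e i) ^ epsNum (e i) v) v + ((e i) ^ epsNum (e i) v') v' := by
        rw [map_add, heq]
      have hsucc : ((e i) ^ (epsNum (e i) v + 1)) (v + v') = 0 := by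
        rw [map_add, hvz, heq, hv'z, add_zero]
      have hne0 : v + v' ≠ 0 := by
        intro h0
        rw [h0, map_zero] at htop
        exact hs0 htop.symm
      have hEps : epsNum (e i) (v + v') = epsNum (e i) v :=
        epsNum_eq _ hsucc (by rw [htop]; exact hs0)
      refine ⟨hne0, Or.inr ⟨hEps.trans heq, ?_⟩, Or.inr ⟨(hEps.trans heq).symm, ?_⟩⟩
      · rw [hEps, htop]; exact hs1
      · rw [hEps, htop]; exact hs2

end Aux

/-- If nonzero `v, v'` are not equivalent for `≼_𝐢`, then `v + v' ≠ 0` and `v + v'` is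
equivalent to the larger of `v` and `v'`. -/
theorem lexPre_add_of_not_equiv {k V : Type*} [CommRing k] [AddCommGroup V] [Module k V]
    {I : Type*} (e : I → Module.End k V)
    (hnil : ∀ (i : I) (v : V), ∃ n : ℕ, ((e i) ^ n) v = 0)
    (l : List I) (v v' : V) (hv : v ≠ 0) (hv' : v' ≠ 0)
    (hne : ¬ (lexPre e l v v' ∧ lexPre e l v' v)) :
    v + v' ≠ 0 ∧
      (lexPre e l v' v → (lexPre e l (v + v') v ∧ lexPre e l v (v + v'))) ∧
      (lexPre e l v v' → (lexPre e l (v + v') v' ∧ lexPre e l v' (v + v'))) := by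
  rcases lexPre_total e l v v' with h | h
  · have h' : ¬ lexPre e l v' v := fun hx => hne ⟨h, hx⟩
    obtain ⟨h0, h1, h2⟩ := lexPre_key e hnil l v v' hv hv' h h'
    exact ⟨h0, fun hx => absurd hx h', fun _ => ⟨h1, h2⟩⟩
  · have h' : ¬ lexPre e l v v' := fun hx => hne ⟨hx, h⟩
    obtain ⟨h0, h1, h2⟩ := lexPre_key e hnil l v' v hv' hv h h'
    rw [add_comm] at h0 h1 h2
    exact ⟨h0, fun _ => ⟨h1, h2⟩, fun hx => absurd hx h'⟩
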